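/- Let $2 \le p < \infty$ with conjugate exponent $p^*$, $X$ a Banach space whose dual $X^*$ has type $a$ with $p^* \le a \le 2$, and $(x_n^*)$ in $X^*$ with $w_p(x_n^*) < \infty$ and $\|x_n^*\| \to 0$. Define $U : C([0,1],X) \to \ell_p$ by $U(f) = (\int_0^1 x_n^*(f(t)) r_n(t)\,dt)_n$. Then the adjoint $U^* : \ell_{p^*} \to C([0,1],X)^*$ satisfies, for $h_\xi(t) = \sum_n \xi_n x_n^* r_n(t)$, the bound $\|U^*(\xi)\| = \int_0^1 \|h_\xi(t)\|\,dt \le T_a(X^*)(\sum_n |\xi_n|^{p^*}\|x_n^*\|^{p^*})^{1/p^*}$, and $U^*$ is the norm limit of the finite-rank operators $V_n(\xi) = U^*(\xi_1,\dots,\xi_n,0,\dots)$ with $\|U^* - V_n\| \le T_a(X^*)\sup_{k \ge n+1}\|x_k^*\| \to 0$; hence $U$ is a compact operator. -/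

import Mathlib

open Filter Topology MeasureTheory
open scoped ENNReal

/-- The `k`-th Rademacher function, `r_k(t) = sign (sin (2^k π t))`. -/
noncomputable def rademacher (k : ℕ) (t : ℝ) : ℝ :=
  Real.sign (Real.sin (2 ^ k * Real.pi * t))

theorem measurable_rademacher (k : ℕ) : Measurable (rademacher k) := by
  have hsign : Measurable Real.sign := by
    have h : Real.sign = fun x : ℝ => if x < 0 then (-1:ℝ) else if 0 < x then 1 else 0 := by
      funext x; rw [Real.sign]
    rw [h]
    exact Measurable.ite (measurableSet_lt measurable_id measurable_const)
      measurable_const (Measurable.ite (measurableSet_lt measurable_const measurable_id)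
        measurable_const measurable_const)
  exact hsign.comp (Real.continuous_sin.measurable.comp (by fun_prop))

theorem abs_rademacher_le (k : ℕ) (t : ℝ) : |rademacher k t| ≤ 1 := by
  rcases Real.sign_apply_eq (Real.sin (2 ^ k * Real.pi * t)) with h | h | h <;>
    simp [rademacher, h]

theorem sign_mul_self' (y : ℝ) : Real.sign y * y = |y| := by
  rcases lt_trichotomy y 0 with h | h | h
  · rw [Real.sign_of_neg h, abs_of_neg h]; ring
  · simp [h]
  · rw [Real.sign_of_pos h, abs_of_pos h]; ring

theorem sum_rpow_le_rpow_sum {ι : Type*} {s : Finset ι} {u : ι → ℝ} (hu : ∀ i ∈ s, 0 ≤ u i)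
    {r : ℝ} (hr : 1 ≤ r) : ∑ i ∈ s, u i ^ r ≤ (∑ i ∈ s, u i) ^ r := by
  rcases eq_or_lt_of_le (Finset.sum_nonneg hu) with hS | hS
  · have hz : ∀ i ∈ s, u i = 0 := by
      intro i hi
      exact (Finset.sum_eq_zero_iff_of_nonneg hu).1 hS.symm i hi
    have h1 : ∑ i ∈ s, u i ^ r = 0 := Finset.sum_eq_zero fun i hi => by
      rw [hz i hi, Real.zero_rpow (by linarith)]
    rw [h1]
    exact Real.rpow_nonneg (Finset.sum_nonneg hu) r
  · have hstep : ∀ i ∈ s, u i ^ r ≤ (∑ j ∈ s, u j) ^ (r - 1) * u i := by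
      intro i hi
      rcases eq_or_lt_of_le (hu i hi) with h0 | h0
      · rw [← h0, Real.zero_rpow (by linarith), mul_zero]
      · have h1 : u i ^ (r - 1) * u i = u i ^ r := by
          rw [← Real.rpow_add_one (ne_of_gt h0) (r - 1)]
          norm_num
        rw [← h1]
        exact mul_le_mul_of_nonneg_right
          (Real.rpow_le_rpow (hu i hi) (Finset.single_le_sum hu hi) (by linarith))
          (hu i hi)
    have h2 : ∑ i ∈ s, u i ^ r ≤ (∑ j ∈ s, u j) ^ (r - 1) * ∑ i ∈ s, u i := by
      rw [Finset.mul_sum]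
      exact Finset.sum_le_sum hstep
    have h3 : (∑ j ∈ s, u j) ^ (r - 1) * ∑ i ∈ s, u i = (∑ i ∈ s, u i) ^ r := by
      rw [← Real.rpow_add_one (ne_of_gt hS) (r - 1)]
      norm_num
    rw [h3] at h2
    exact h2

theorem pnorm_mono {ι : Type*} {s : Finset ι} {u : ι → ℝ} (hu : ∀ i ∈ s, 0 ≤ u i)
    {b c : ℝ} (hb : 0 < b) (hbc : b ≤ c) :
    (∑ i ∈ s, u i ^ c) ^ (1/c) ≤ (∑ i ∈ s, u i ^ b) ^ (1/b) := by
  have hc : 0 < c := hb.trans_le hbc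
  have h1 : ∀ i ∈ s, u i ^ c = (u i ^ b) ^ (c/b) := fun i hi => by
    rw [← Real.rpow_mul (hu i hi)]
    congr 1
    field_simp
  have h2 : ∑ i ∈ s, u i ^ c ≤ (∑ i ∈ s, u i ^ b) ^ (c/b) := by
    rw [Finset.sum_congr rfl h1]
    exact sum_rpow_le_rpow_sum (fun i hi => Real.rpow_nonneg (hu i hi) b)
      ((one_le_div hb).2 hbc)
  have h3 : ((∑ i ∈ s, u i ^ b) ^ (c/b)) ^ (1/c) = (∑ i ∈ s, u i ^ b) ^ (1/b) := by
    rw [← Real.rpow_mul (Finset.sum_nonneg fun i hi => Real.rpow_nonneg (hu i hi) b)]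
    congr 1
    field_simp
  rw [← h3]
  exact Real.rpow_le_rpow (Finset.sum_nonneg fun i hi => Real.rpow_nonneg (hu i hi) c) h2
    (by positivity)

section Aux

variable {X : Type*} [NormedAddCommGroup X] [NormedSpace ℝ X]

noncomputable def Spart (x' : ℕ → X →L[ℝ] ℝ) (c : ℕ → ℝ) (m : ℕ) (t : Set.Icc (0:ℝ) 1) :
    X →L[ℝ] ℝ :=
  ∑ n ∈ Finset.range m, (c n * rademacher (n+1) (t : ℝ)) • x' n

theorem Spart_norm_meas (x' : ℕ → X →L[ℝ] ℝ) (c : ℕ → ℝ) (m : ℕ) :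
    Measurable fun t : Set.Icc (0:ℝ) 1 => ‖Spart x' c m t‖ := by
  have h1 : Continuous fun v : Fin m → ℝ => ‖∑ n : Fin m, (c n * v n) • x' n‖ := by
    apply Continuous.norm
    apply continuous_finset_sum
    intro i _
    exact (continuous_const.mul (continuous_apply i)).smul continuous_const
  have h2 : Measurable fun t : Set.Icc (0:ℝ) 1 => (fun n : Fin m => rademacher (n+1) (t:ℝ)) :=
    measurable_pi_lambda _ fun n => (measurable_rademacher _).comp measurable_subtype_coe
  have h3 := h1.measurable.comp h2
  have h4 : (fun t : Set.Icc (0:ℝ) 1 => ‖Spart x' c m t‖) =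
      (fun v : Fin m → ℝ => ‖∑ n : Fin m, (c n * v n) • x' n‖) ∘
        (fun (t : Set.Icc (0:ℝ) 1) (n : Fin m) => rademacher (n+1) (t:ℝ)) := by
    funext t
    simp only [Function.comp_apply]
    rw [Spart]
    congr 1
    exact (Fin.sum_univ_eq_sum_range (fun n => (c n * rademacher (n+1) (t:ℝ)) • x' n) m).symm
  rw [h4]
  exact h3

theorem Spart_norm_le (x' : ℕ → X →L[ℝ] ℝ) (c : ℕ → ℝ) (m : ℕ) (t : Set.Icc (0:ℝ) 1) :
    ‖Spart x' c m t‖ ≤ ∑ n ∈ Finset.range m, |c n| * ‖x' n‖ := by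
  refine (norm_sum_le _ _).trans (Finset.sum_le_sum fun n _ => ?_)
  have h5 := norm_smul (c n * rademacher (n+1) (t:ℝ)) (x' n)
  rw [h5, Real.norm_eq_abs, abs_mul]
  have h1 := abs_rademacher_le (n+1) (t:ℝ)
  have h2 := abs_nonneg (c n)
  have h3 := norm_nonneg (x' n)
  have h6 := mul_le_mul_of_nonneg_right (mul_le_mul_of_nonneg_left h1 h2) h3
  rw [mul_one] at h6
  exact h6

theorem Spart_integrable (x' : ℕ → X →L[ℝ] ℝ) (c : ℕ → ℝ) (m : ℕ) :
    Integrable (fun t : Set.Icc (0:ℝ) 1 => ‖Spart x' c m t‖) := by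
  refine Integrable.mono' (integrable_const (∑ n ∈ Finset.range m, |c n| * ‖x' n‖))
    (Spart_norm_meas x' c m).aestronglyMeasurable (ae_of_all _ fun t => ?_)
  rw [Real.norm_eq_abs, abs_of_nonneg (norm_nonneg _)]
  exact Spart_norm_le x' c m t

theorem Spart_main (x' : ℕ → X →L[ℝ] ℝ) (c : ℕ → ℝ) (R : ℝ) (hR : 0 ≤ R)
    (hb : ∀ m, (∫ t : Set.Icc (0:ℝ) 1, ‖Spart x' c m t‖) ≤ R) :
    (∫ t : Set.Icc (0:ℝ) 1, ‖∑' n, (c n * rademacher (n + 1) (t : ℝ)) • x' n‖) ≤ R := by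
  set F : Set.Icc (0:ℝ) 1 → (X →L[ℝ] ℝ) :=
    fun t => ∑' n, (c n * rademacher (n + 1) (t : ℝ)) • x' n with hF
  by_cases hint : Integrable (fun t : Set.Icc (0:ℝ) 1 => ‖F t‖)
  · rw [integral_eq_lintegral_of_nonneg_ae (ae_of_all _ fun t => norm_nonneg (F t))
      hint.aestronglyMeasurable]
    have hle : (∫⁻ t : Set.Icc (0:ℝ) 1, ENNReal.ofReal ‖F t‖) ≤ ENNReal.ofReal R := by
      have step1 : ∀ t : Set.Icc (0:ℝ) 1, ENNReal.ofReal ‖F t‖ ≤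
          liminf (fun m => ENNReal.ofReal ‖Spart x' c m t‖) atTop := by
        intro t
        by_cases hsm : Summable fun n => (c n * rademacher (n + 1) (t : ℝ)) • x' n
        · have h1 : Tendsto (fun m => Spart x' c m t) atTop (𝓝 (F t)) :=
            hsm.hasSum.tendsto_sum_nat
          have h2 : Tendsto (fun m => ENNReal.ofReal ‖Spart x' c m t‖) atTop
              (𝓝 (ENNReal.ofReal ‖F t‖)) :=
            (ENNReal.continuous_ofReal.tendsto _).comp h1.norm
          exact h2.liminf_eq.ge
        · have h0 : F t = 0 := tsum_eq_zero_of_not_summable hsm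
          rw [h0]
          simp
      calc (∫⁻ t : Set.Icc (0:ℝ) 1, ENNReal.ofReal ‖F t‖)
          ≤ ∫⁻ t : Set.Icc (0:ℝ) 1, liminf (fun m => ENNReal.ofReal ‖Spart x' c m t‖) atTop :=
            lintegral_mono step1
        _ ≤ liminf (fun m => ∫⁻ t : Set.Icc (0:ℝ) 1, ENNReal.ofReal ‖Spart x' c m t‖) atTop :=
            lintegral_liminf_le fun m => (Spart_norm_meas x' c m).ennreal_ofReal
        _ ≤ ENNReal.ofReal R := by
            have hm : ∀ m, (∫⁻ t : Set.Icc (0:ℝ) 1, ENNReal.ofReal ‖Spart x' c m t‖) ≤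
                ENNReal.ofReal R := fun m => by
              rw [← ofReal_integral_eq_lintegral_ofReal (Spart_integrable x' c m)
                (ae_of_all _ fun t => norm_nonneg _)]
              exact ENNReal.ofReal_le_ofReal (hb m)
            calc liminf (fun m => ∫⁻ t : Set.Icc (0:ℝ) 1, ENNReal.ofReal ‖Spart x' c m t‖) atTop
                ≤ liminf (fun _ => ENNReal.ofReal R) atTop :=
                  liminf_le_liminf (Eventually.of_forall hm)
              _ = ENNReal.ofReal R := liminf_const _
    calc (∫⁻ t : Set.Icc (0:ℝ) 1, ENNReal.ofReal ‖F t‖).toReal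
        ≤ (ENNReal.ofReal R).toReal := ENNReal.toReal_mono ENNReal.ofReal_ne_top hle
      _ = R := ENNReal.toReal_ofReal hR
  · rw [integral_undef hint]
    exact hR

noncomputable def coord (x' : ℕ → X →L[ℝ] ℝ) (f : C(Set.Icc (0:ℝ) 1, X)) (n : ℕ) : ℝ :=
  ∫ t : Set.Icc (0:ℝ) 1, x' n (f t) * rademacher (n + 1) (t : ℝ)

theorem coord_integrable (x' : ℕ → X →L[ℝ] ℝ) (f : C(Set.Icc (0:ℝ) 1, X)) (n : ℕ) :
    Integrable (fun t : Set.Icc (0:ℝ) 1 => x' n (f t) * rademacher (n + 1) (t : ℝ)) := by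
  have hm : Measurable fun t : Set.Icc (0:ℝ) 1 => x' n (f t) * rademacher (n+1) (t:ℝ) :=
    (((x' n).continuous.comp f.continuous).measurable).mul
      ((measurable_rademacher _).comp measurable_subtype_coe)
  refine Integrable.mono' (integrable_const (‖x' n‖ * ‖f‖)) hm.aestronglyMeasurable
    (ae_of_all _ fun t => ?_)
  rw [Real.norm_eq_abs, abs_mul]
  have h1 : |x' n (f t)| ≤ ‖x' n‖ * ‖f‖ := by
    calc |x' n (f t)| = ‖x' n (f t)‖ := (Real.norm_eq_abs _).symm
      _ ≤ ‖x' n‖ * ‖f t‖ := (x' n).le_opNorm (f t)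
      _ ≤ ‖x' n‖ * ‖f‖ := mul_le_mul_of_nonneg_left (f.norm_coe_le_norm t) (norm_nonneg _)
  have h2 := abs_rademacher_le (n+1) (t:ℝ)
  calc |x' n (f t)| * |rademacher (n+1) (t:ℝ)| ≤ (‖x' n‖ * ‖f‖) * 1 :=
        mul_le_mul h1 h2 (abs_nonneg _) (by positivity)
    _ = ‖x' n‖ * ‖f‖ := mul_one _

theorem coord_add (x' : ℕ → X →L[ℝ] ℝ) (f g : C(Set.Icc (0:ℝ) 1, X)) (n : ℕ) :
    coord x' (f + g) n = coord x' f n + coord x' g n := by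
  rw [coord, coord, coord, ← integral_add (coord_integrable x' f n) (coord_integrable x' g n)]
  refine integral_congr_ae (ae_of_all _ fun t => ?_)
  simp only [ContinuousMap.add_apply, map_add]
  ring

theorem coord_smul (x' : ℕ → X →L[ℝ] ℝ) (r : ℝ) (f : C(Set.Icc (0:ℝ) 1, X)) (n : ℕ) :
    coord x' (r • f) n = r * coord x' f n := by
  rw [coord, coord, ← integral_const_mul]
  refine integral_congr_ae (ae_of_all _ fun t => ?_)
  simp only [ContinuousMap.smul_apply, _root_.map_smul, smul_eq_mul]
  ring

end Aux
set_option maxHeartbeats 1000000 in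
theorem stmt19 {X : Type*} [NormedAddCommGroup X] [NormedSpace ℝ X] [CompleteSpace X]
    (p ps a Ta : ℝ) (hp : 2 ≤ p) (hps : 1 / p + 1 / ps = 1)
    (hpsa : ps ≤ a) (ha2 : a ≤ 2)
    [Fact ((1 : ℝ≥0∞) ≤ ENNReal.ofReal p)]
    (hType : ∀ (m : ℕ) (z : Fin m → (X →L[ℝ] ℝ)),
      (∫ t : Set.Icc (0:ℝ) 1, ‖∑ k, rademacher (k.val + 1) (t : ℝ) • z k‖) ≤
        Ta * (∑ k, ‖z k‖ ^ a) ^ (1 / a))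
    (x' : ℕ → X →L[ℝ] ℝ)
    (hsum : ∀ x : X, Summable fun n => |x' n x| ^ p)
    (w : ℝ) (hw : ∀ x : X, ‖x‖ ≤ 1 → (∑' n, |x' n x| ^ p) ≤ w)
    (hx0 : Tendsto (fun n => ‖x' n‖) atTop (𝓝 0)) :
    (∀ ξ : ℕ → ℝ, Summable (fun n => |ξ n| ^ ps) →
      (∫ t : Set.Icc (0:ℝ) 1, ‖∑' n, (ξ n * rademacher (n + 1) (t : ℝ)) • x' n‖) ≤
        Ta * (∑' n, |ξ n| ^ ps * ‖x' n‖ ^ ps) ^ (1 / ps)) ∧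
    (∀ (m : ℕ) (ξ : ℕ → ℝ), Summable (fun n => |ξ n| ^ ps) → (∑' n, |ξ n| ^ ps) ≤ 1 →
      (∫ t : Set.Icc (0:ℝ) 1,
          ‖∑' n, (if n < m then 0 else ξ n * rademacher (n + 1) (t : ℝ)) • x' n‖) ≤
        Ta * ⨆ k, ‖x' (m + k)‖) ∧
    (∃ U : C(Set.Icc (0:ℝ) 1, X) →L[ℝ] lp (fun _ : ℕ => ℝ) (ENNReal.ofReal p),
      (∀ (f : C(Set.Icc (0:ℝ) 1, X)) (n : ℕ),
        U f n = ∫ t, x' n (f t) * rademacher (n + 1) (t : ℝ)) ∧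
      IsCompactOperator U) := by
  classical
  have hp0 : (0:ℝ) < p := by linarith
  have hinv : 1/ps = 1 - 1/p := by linarith
  have hppos : 1/p ≤ 1/2 := by
    rw [div_le_div_iff₀ hp0 (by norm_num : (0:ℝ) < 2)]
    linarith
  have hinvp : (0:ℝ) < 1/p := by positivity
  have hips : 0 < 1/ps := by rw [hinv]; linarith
  have hps0 : (0:ℝ) < ps := by
    rcases lt_trichotomy ps 0 with h|h|h
    · have : 1/ps < 0 := one_div_neg.2 h
      linarith
    · rw [h] at hips; norm_num at hips
    · exact h
  have hips1 : 1/ps < 1 := by rw [hinv]; linarith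
  have hps1 : 1 < ps := by
    by_contra hle
    push_neg at hle
    have : 1 ≤ 1/ps := by rw [le_div_iff₀ hps0]; linarith
    linarith
  have ha0 : (0:ℝ) < a := lt_of_lt_of_le hps0 hpsa
  have hpps : (p-1) * ps = p := by
    have h := hps
    field_simp at h
    nlinarith [h]
  have hptoReal : (ENNReal.ofReal p).toReal = p := ENNReal.toReal_ofReal hp0.le
  obtain ⟨M, hM⟩ : ∃ M : ℝ, ∀ n, ‖x' n‖ ≤ M := by
    obtain ⟨M, hM⟩ := hx0.bddAbove_range
    exact ⟨M, fun n => hM (Set.mem_range_self n)⟩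
  have hQbdd : ∀ m : ℕ, BddAbove (Set.range fun k => ‖x' (m+k)‖) := fun m =>
    ⟨M, by rintro y ⟨k, rfl⟩; exact hM _⟩
  have hQ0 : ∀ m : ℕ, 0 ≤ ⨆ k, ‖x' (m+k)‖ := fun m =>
    le_trans (norm_nonneg _) (le_ciSup (hQbdd m) 0)
  have hQle : ∀ m n : ℕ, m ≤ n → ‖x' n‖ ≤ ⨆ k, ‖x' (m+k)‖ := by
    intro m n h
    have h2 : n = m + (n - m) := by omega
    rw [h2]
    exact le_ciSup (hQbdd m) (n - m)
  by_cases hzero : ∀ n, x' n = 0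
  · refine ⟨?_, ?_, ?_⟩
    · intro ξ hξ
      simp only [hzero, smul_zero, tsum_zero, norm_zero, integral_zero,
        Real.zero_rpow hps0.ne', mul_zero]
      rw [Real.zero_rpow (ne_of_gt hips), mul_zero]
    · intro m ξ h1 h2
      simp only [hzero, smul_zero, tsum_zero, norm_zero, integral_zero, ciSup_const, mul_zero]
      exact le_refl 0
    · refine ⟨0, fun f n => ?_, ?_⟩
      · simp [hzero]
      · exact isCompactOperator_zero
  push_neg at hzero
  obtain ⟨N, hN⟩ := hzero
  -- nonnegativity of Ta
  have hTa : 0 ≤ Ta := by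
    set g : Set.Icc (0:ℝ) 1 → ℝ := fun t => ‖rademacher 1 (t:ℝ) • x' N‖ with hg
    have hgeq : g = fun t : Set.Icc (0:ℝ) 1 => |rademacher 1 (t:ℝ)| * ‖x' N‖ := by
      funext t
      rw [hg]
      simp only
      have h5 := norm_smul (rademacher 1 (t:ℝ)) (x' N)
      rw [h5, Real.norm_eq_abs]
    have hg_meas : Measurable g := by
      rw [hgeq]
      exact (((measurable_rademacher 1).comp measurable_subtype_coe).abs).mul_const _
    have hg_int : Integrable g := by
      refine Integrable.mono' (integrable_const ‖x' N‖) hg_meas.aestronglyMeasurable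
        (ae_of_all _ fun t => ?_)
      rw [Real.norm_eq_abs, abs_of_nonneg (by rw [hgeq]; positivity)]
      rw [hgeq]
      exact mul_le_of_le_one_left (norm_nonneg _) (abs_rademacher_le _ _)
    have hup : (∫ t : Set.Icc (0:ℝ) 1, g t) ≤ Ta * ‖x' N‖ := by
      calc (∫ t : Set.Icc (0:ℝ) 1, g t)
          = ∫ t : Set.Icc (0:ℝ) 1,
              ‖∑ k : Fin 1, rademacher (k.val + 1) (t : ℝ) • (fun _ : Fin 1 => x' N) k‖ := by
            congr 1
            funext t
            rw [Fin.sum_univ_one]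
            simp [hg]
        _ ≤ Ta * (∑ k : Fin 1, ‖(fun _ : Fin 1 => x' N) k‖ ^ a) ^ (1/a) := hType 1 _
        _ = Ta * ‖x' N‖ := by
            rw [Fin.sum_univ_one, ← Real.rpow_mul (norm_nonneg _), mul_one_div,
              div_self ha0.ne', Real.rpow_one]
    set A : Set (Set.Icc (0:ℝ) 1) := {t | 0 < Real.sin (2 * Real.pi * (t:ℝ))} with hA
    have hA_meas : MeasurableSet A :=
      measurableSet_lt measurable_const
        (Real.continuous_sin.measurable.comp (by fun_prop))
    have hInd : ∀ t, A.indicator (fun _ => ‖x' N‖) t ≤ g t := by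
      intro t
      by_cases h : t ∈ A
      · rw [Set.indicator_of_mem h]
        have hrad : rademacher 1 (t:ℝ) = 1 := by
          show Real.sign (Real.sin (2 ^ 1 * Real.pi * (t:ℝ))) = 1
          rw [pow_one]
          exact Real.sign_of_pos h
        rw [hg]
        simp only
        rw [hrad, one_smul]
      · rw [Set.indicator_of_notMem h]
        rw [hg]
        simp only
        exact norm_nonneg _
    have hvol : ENNReal.ofReal (1/2) ≤ volume A := by
      have hsub : (Subtype.val ⁻¹' (Set.Ioo (0:ℝ) (1/2)) : Set (Set.Icc (0:ℝ) 1)) ⊆ A := by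
        rintro t ht
        simp only [Set.mem_preimage, Set.mem_Ioo] at ht
        have hπ := Real.pi_pos
        show 0 < Real.sin (2 * Real.pi * (t:ℝ))
        apply Real.sin_pos_of_pos_of_lt_pi
        · nlinarith [ht.1]
        · nlinarith [ht.2]
      have hcomp : (volume : Measure (Set.Icc (0:ℝ) 1)) (Subtype.val ⁻¹' (Set.Ioo (0:ℝ) (1/2)))
          = volume (Set.Ioo (0:ℝ) (1/2)) := by
        rw [show (volume : Measure (Set.Icc (0:ℝ) 1)) = Measure.comap Subtype.val volume from rfl,
          MeasurableEmbedding.comap_apply (MeasurableEmbedding.subtype_coe measurableSet_Icc),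
          Subtype.image_preimage_coe]
        congr 1
        refine Set.inter_eq_self_of_subset_right ?_
        intro x hx
        simp only [Set.mem_Ioo] at hx
        simp only [Set.mem_Icc]
        constructor <;> [linarith [hx.1]; linarith [hx.2]]
      calc ENNReal.ofReal (1/2) = volume (Set.Ioo (0:ℝ) (1/2)) := by
            rw [Real.volume_Ioo]
            norm_num
        _ = _ := hcomp.symm
        _ ≤ volume A := measure_mono hsub
    have hlow : (1/2 : ℝ) * ‖x' N‖ ≤ ∫ t : Set.Icc (0:ℝ) 1, g t := by
      have hind_int : Integrable (A.indicator fun _ : Set.Icc (0:ℝ) 1 => ‖x' N‖) :=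
        (integrable_const _).indicator hA_meas
      have h2 : (∫ t : Set.Icc (0:ℝ) 1, A.indicator (fun _ => ‖x' N‖) t)
          ≤ ∫ t : Set.Icc (0:ℝ) 1, g t :=
        integral_mono hind_int hg_int hInd
      have h3 : (∫ t : Set.Icc (0:ℝ) 1, A.indicator (fun _ => ‖x' N‖) t)
          = (volume A).toReal * ‖x' N‖ := by
        rw [integral_indicator_const _ hA_meas, smul_eq_mul]
        rfl
      have h4 : (1/2:ℝ) ≤ (volume A).toReal := by
        have h5 := ENNReal.toReal_mono (measure_ne_top volume A) hvol
        rwa [ENNReal.toReal_ofReal (by norm_num : (0:ℝ) ≤ 1/2)] at h5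
      have h6 := mul_le_mul_of_nonneg_right h4 (norm_nonneg (x' N))
      linarith
    have hxN : (0:ℝ) < ‖x' N‖ := norm_pos_iff.2 hN
    have h7 : (1/2:ℝ) * ‖x' N‖ ≤ Ta * ‖x' N‖ := le_trans hlow hup
    nlinarith [h7, hxN]
  -- key inequalities
  have key_a : ∀ (c : ℕ → ℝ) (m : ℕ), (∫ t : Set.Icc (0:ℝ) 1, ‖Spart x' c m t‖) ≤
      Ta * (∑ n ∈ Finset.range m, (|c n| * ‖x' n‖) ^ a) ^ (1/a) := by
    intro c m
    calc (∫ t : Set.Icc (0:ℝ) 1, ‖Spart x' c m t‖)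
        = ∫ t : Set.Icc (0:ℝ) 1,
            ‖∑ k : Fin m, rademacher (k.val + 1) (t:ℝ) • (fun j : Fin m => c j • x' j) k‖ := by
          congr 1
          funext t
          rw [Spart, ← Fin.sum_univ_eq_sum_range (fun n => (c n * rademacher (n+1) (t:ℝ)) • x' n) m]
          congr 1
          refine Finset.sum_congr rfl fun k _ => ?_
          rw [smul_smul, mul_comm]
      _ ≤ Ta * (∑ k : Fin m, ‖(fun j : Fin m => c j • x' j) k‖ ^ a) ^ (1/a) := hType m _
      _ = Ta * (∑ n ∈ Finset.range m, (|c n| * ‖x' n‖) ^ a) ^ (1/a) := by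
          congr 2
          rw [Fin.sum_univ_eq_sum_range (fun n => ‖c n • x' n‖ ^ a) m]
          refine Finset.sum_congr rfl fun n _ => ?_
          have h5 := norm_smul (c n) (x' n)
          rw [h5, Real.norm_eq_abs]
  have key_ps : ∀ (c : ℕ → ℝ) (m : ℕ), (∫ t : Set.Icc (0:ℝ) 1, ‖Spart x' c m t‖) ≤
      Ta * (∑ n ∈ Finset.range m, (|c n| * ‖x' n‖) ^ ps) ^ (1/ps) := fun c m =>
    (key_a c m).trans (mul_le_mul_of_nonneg_left
      (pnorm_mono (fun n _ => mul_nonneg (abs_nonneg _) (norm_nonneg _)) hps0 hpsa) hTa)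
  refine ⟨?_, ?_, ?_⟩
  · -- part 1
    intro ξ hξ
    have hsum2 : Summable fun n => (|ξ n| * ‖x' n‖) ^ ps := by
      refine Summable.of_nonneg_of_le
        (fun n => Real.rpow_nonneg (mul_nonneg (abs_nonneg _) (norm_nonneg _)) _)
        (fun n => ?_) (hξ.mul_left (M ^ ps))
      rw [Real.mul_rpow (abs_nonneg _) (norm_nonneg _)]
      calc |ξ n| ^ ps * ‖x' n‖ ^ ps ≤ |ξ n| ^ ps * M ^ ps :=
            mul_le_mul_of_nonneg_left (Real.rpow_le_rpow (norm_nonneg _) (hM n) hps0.le)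
              (Real.rpow_nonneg (abs_nonneg _) _)
        _ = M ^ ps * |ξ n| ^ ps := mul_comm _ _
    have heq : (∑' n, |ξ n| ^ ps * ‖x' n‖ ^ ps) = ∑' n, (|ξ n| * ‖x' n‖) ^ ps :=
      tsum_congr fun n => (Real.mul_rpow (abs_nonneg _) (norm_nonneg _)).symm
    rw [heq]
    refine Spart_main x' ξ _ (mul_nonneg hTa (Real.rpow_nonneg (tsum_nonneg fun n =>
      Real.rpow_nonneg (mul_nonneg (abs_nonneg _) (norm_nonneg _)) _) _)) ?_
    intro m
    refine (key_ps ξ m).trans (mul_le_mul_of_nonneg_left (Real.rpow_le_rpow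
      (Finset.sum_nonneg fun n _ => Real.rpow_nonneg (mul_nonneg (abs_nonneg _) (norm_nonneg _)) _)
      (Summable.sum_le_tsum _ (fun n _ => Real.rpow_nonneg (mul_nonneg (abs_nonneg _) (norm_nonneg _)) _)
        hsum2) hips.le) hTa)
  · -- part 2
    intro m ξ hξ hξ1
    have hgoal : (∫ t : Set.Icc (0:ℝ) 1,
        ‖∑' n, (if n < m then 0 else ξ n * rademacher (n + 1) (t : ℝ)) • x' n‖)
        = ∫ t : Set.Icc (0:ℝ) 1,
        ‖∑' n, ((if n < m then 0 else ξ n) * rademacher (n + 1) (t : ℝ)) • x' n‖ := by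
      congr 1
      funext t
      congr 1
      refine tsum_congr fun n => ?_
      by_cases h : n < m <;> simp [h]
    rw [hgoal]
    refine Spart_main x' (fun n => if n < m then 0 else ξ n) (Ta * ⨆ k, ‖x' (m+k)‖)
      (mul_nonneg hTa (hQ0 m)) ?_
    intro m'
    refine (key_ps _ m').trans (mul_le_mul_of_nonneg_left ?_ hTa)
    show (∑ n ∈ Finset.range m', (|if n < m then 0 else ξ n| * ‖x' n‖) ^ ps) ^ (1/ps)
        ≤ ⨆ k, ‖x' (m+k)‖
    have h1 : ∑ n ∈ Finset.range m', (|if n < m then 0 else ξ n| * ‖x' n‖) ^ ps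
        ≤ (⨆ k, ‖x' (m+k)‖) ^ ps := by
      have hterm : ∀ n ∈ Finset.range m', (|if n < m then 0 else ξ n| * ‖x' n‖) ^ ps ≤
          (⨆ k, ‖x' (m+k)‖) ^ ps * |ξ n| ^ ps := by
        intro n _
        by_cases h : n < m
        · rw [if_pos h, abs_zero, zero_mul, Real.zero_rpow hps0.ne']
          exact mul_nonneg (Real.rpow_nonneg (hQ0 m) _) (Real.rpow_nonneg (abs_nonneg _) _)
        · rw [if_neg h, Real.mul_rpow (abs_nonneg _) (norm_nonneg _), mul_comm]
          exact mul_le_mul_of_nonneg_right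
            (Real.rpow_le_rpow (norm_nonneg _) (hQle m n (not_lt.1 h)) hps0.le)
            (Real.rpow_nonneg (abs_nonneg _) _)
      calc ∑ n ∈ Finset.range m', (|if n < m then 0 else ξ n| * ‖x' n‖) ^ ps
          ≤ ∑ n ∈ Finset.range m', (⨆ k, ‖x' (m+k)‖) ^ ps * |ξ n| ^ ps :=
            Finset.sum_le_sum hterm
        _ = (⨆ k, ‖x' (m+k)‖) ^ ps * ∑ n ∈ Finset.range m', |ξ n| ^ ps := by
            rw [Finset.mul_sum]
        _ ≤ (⨆ k, ‖x' (m+k)‖) ^ ps * 1 := by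
            refine mul_le_mul_of_nonneg_left ?_ (Real.rpow_nonneg (hQ0 m) _)
            exact (Summable.sum_le_tsum _ (fun n _ => Real.rpow_nonneg (abs_nonneg _) _) hξ).trans hξ1
        _ = (⨆ k, ‖x' (m+k)‖) ^ ps := mul_one _
    calc (∑ n ∈ Finset.range m', (|if n < m then 0 else ξ n| * ‖x' n‖) ^ ps) ^ (1/ps)
        ≤ ((⨆ k, ‖x' (m+k)‖) ^ ps) ^ (1/ps) :=
          Real.rpow_le_rpow (Finset.sum_nonneg fun n _ =>
            Real.rpow_nonneg (mul_nonneg (abs_nonneg _) (norm_nonneg _)) _) h1 hips.le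
      _ = ⨆ k, ‖x' (m+k)‖ := by
          rw [← Real.rpow_mul (hQ0 m), mul_one_div, div_self hps0.ne', Real.rpow_one]
  · -- part 3
    have E : ∀ (m M' : ℕ) (f : C(Set.Icc (0:ℝ) 1, X)),
        ∑ n ∈ Finset.Ico m M', |coord x' f n| ^ p ≤ (Ta * (⨆ k, ‖x' (m+k)‖) * ‖f‖) ^ p := by
      intro m M' f
      by_cases hD0 : ∑ n ∈ Finset.Ico m M', |coord x' f n| ^ p = 0
      · rw [hD0]
        exact Real.rpow_nonneg (mul_nonneg (mul_nonneg hTa (hQ0 m)) (norm_nonneg f)) p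
      · have hpos : 0 < ∑ n ∈ Finset.Ico m M', |coord x' f n| ^ p :=
          (Finset.sum_nonneg fun n _ => Real.rpow_nonneg (abs_nonneg _) p).lt_of_ne (Ne.symm hD0)
        have hmM : m ≤ M' := by
          by_contra h
          refine hD0 ?_
          rw [Finset.Ico_eq_empty (by omega)]
          simp
        set Sp := ∑ n ∈ Finset.Ico m M', |coord x' f n| ^ p with hSg
        set D := Sp ^ (1/ps) with hDdef
        have hD : 0 < D := Real.rpow_pos_of_pos hpos _
        set ξ : ℕ → ℝ := fun n => if n ∈ Finset.Ico m M'
          then Real.sign (coord x' f n) * |coord x' f n| ^ (p-1) / D else 0 with hξdef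
        have hξ0 : ∀ n, n ∉ Finset.Ico m M' → ξ n = 0 := by
          intro n hn
          rw [hξdef]
          simp only []
          rw [if_neg hn]
        have habs : ∀ n ∈ Finset.Ico m M', |ξ n| ^ ps = |coord x' f n| ^ p / Sp := by
          intro n hn
          rw [hξdef]
          simp only []
          rw [if_pos hn]
          by_cases h : coord x' f n = 0
          · rw [h, Real.sign_zero, zero_mul, zero_div, abs_zero,
              Real.zero_rpow hps0.ne', Real.zero_rpow (ne_of_gt hp0), zero_div]
          · have habs0 : 0 < |coord x' f n| := abs_pos.2 h
            have hsign : |Real.sign (coord x' f n)| = 1 := by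
              rcases Real.sign_apply_eq_of_ne_zero _ h with hs | hs <;> rw [hs] <;> norm_num
            rw [abs_div, abs_mul, hsign, one_mul, abs_of_pos hD,
              abs_of_nonneg (Real.rpow_nonneg (abs_nonneg _) _),
              Real.div_rpow (Real.rpow_nonneg (abs_nonneg _) _) hD.le,
              ← Real.rpow_mul (abs_nonneg _), hpps, hDdef,
              ← Real.rpow_mul hpos.le, one_div_mul_cancel hps0.ne', Real.rpow_one]
        have hξsum : ∑ n ∈ Finset.Ico m M', |ξ n| ^ ps = 1 := by
          rw [Finset.sum_congr rfl habs, ← Finset.sum_div, ← hSg, div_self (ne_of_gt hpos)]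
        have hpair : ∑ n ∈ Finset.Ico m M', ξ n * coord x' f n = Sp ^ (1/p) := by
          have hterm : ∀ n ∈ Finset.Ico m M', ξ n * coord x' f n = |coord x' f n| ^ p / D := by
            intro n hn
            rw [hξdef]
            simp only []
            rw [if_pos hn, div_mul_eq_mul_div]
            congr 1
            by_cases h : coord x' f n = 0
            · rw [h, abs_zero, Real.zero_rpow (ne_of_gt hp0)]
              ring
            · have habs0 : 0 < |coord x' f n| := abs_pos.2 h
              have h8 : |coord x' f n| ^ (p-1) * |coord x' f n| = |coord x' f n| ^ p := by
                rw [← Real.rpow_add_one (ne_of_gt habs0) (p-1)]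
                norm_num
              calc Real.sign (coord x' f n) * |coord x' f n| ^ (p-1) * coord x' f n
                  = |coord x' f n| ^ (p-1) * (Real.sign (coord x' f n) * coord x' f n) := by ring
                _ = |coord x' f n| ^ (p-1) * |coord x' f n| := by rw [sign_mul_self']
                _ = |coord x' f n| ^ p := h8
          rw [Finset.sum_congr rfl hterm, ← Finset.sum_div, ← hSg, hDdef]
          rw [show Sp / Sp ^ (1/ps) = Sp ^ ((1:ℝ)) / Sp ^ (1/ps) from by rw [Real.rpow_one],
            ← Real.rpow_sub hpos, show (1:ℝ) - 1/ps = 1/p from by linarith]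
        have hSrep : ∀ t : Set.Icc (0:ℝ) 1, Spart x' ξ M' t
            = ∑ n ∈ Finset.Ico m M', (ξ n * rademacher (n+1) (t:ℝ)) • x' n := by
          intro t
          rw [Spart, Finset.range_eq_Ico, ← Finset.sum_Ico_consecutive _ (Nat.zero_le m) hmM]
          have hz : ∑ n ∈ Finset.Ico 0 m, (ξ n * rademacher (n+1) (t:ℝ)) • x' n = 0 := by
            refine Finset.sum_eq_zero fun n hn => ?_
            have hn' : n < m := (Finset.mem_Ico.1 hn).2
            rw [hξ0 n (by simp only [Finset.mem_Ico]; omega), zero_mul, zero_smul]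
          rw [hz, zero_add]
        have happly : ∀ t : Set.Icc (0:ℝ) 1, (Spart x' ξ M' t) (f t)
            = ∑ n ∈ Finset.Ico m M', ξ n * (x' n (f t) * rademacher (n+1) (t:ℝ)) := by
          intro t
          rw [hSrep t, ContinuousLinearMap.sum_apply]
          refine Finset.sum_congr rfl fun n _ => ?_
          rw [ContinuousLinearMap.smul_apply, smul_eq_mul]
          ring
        have hpair2 : ∑ n ∈ Finset.Ico m M', ξ n * coord x' f n
            = ∫ t : Set.Icc (0:ℝ) 1, (Spart x' ξ M' t) (f t) := by
          have h9 : ∀ n ∈ Finset.Ico m M', ξ n * coord x' f n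
              = ∫ t : Set.Icc (0:ℝ) 1, ξ n * (x' n (f t) * rademacher (n+1) (t:ℝ)) := by
            intro n _
            rw [coord, integral_const_mul]
          rw [Finset.sum_congr rfl h9,
            ← integral_finset_sum _ (fun n _ => (coord_integrable x' f n).const_mul (ξ n))]
          refine integral_congr_ae (ae_of_all _ fun t => ?_)
          exact (happly t).symm
        have hint1 : Integrable (fun t : Set.Icc (0:ℝ) 1 => (Spart x' ξ M' t) (f t)) := by
          have heq2 : (fun t : Set.Icc (0:ℝ) 1 => (Spart x' ξ M' t) (f t)) =
              fun t => ∑ n ∈ Finset.Ico m M', ξ n * (x' n (f t) * rademacher (n+1) (t:ℝ)) := by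
            funext t
            exact happly t
          rw [heq2]
          exact integrable_finset_sum _ fun n _ => (coord_integrable x' f n).const_mul (ξ n)
        have hub : (∑ n ∈ Finset.range M', (|ξ n| * ‖x' n‖) ^ ps) ^ (1/ps)
            ≤ ⨆ k, ‖x' (m+k)‖ := by
          have h1 : ∑ n ∈ Finset.range M', (|ξ n| * ‖x' n‖) ^ ps
              ≤ (⨆ k, ‖x' (m+k)‖) ^ ps := by
            have hterm : ∀ n ∈ Finset.range M', (|ξ n| * ‖x' n‖) ^ ps
                ≤ (⨆ k, ‖x' (m+k)‖) ^ ps * |ξ n| ^ ps := by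
              intro n _
              by_cases h : n ∈ Finset.Ico m M'
              · rw [Real.mul_rpow (abs_nonneg _) (norm_nonneg _), mul_comm]
                exact mul_le_mul_of_nonneg_right
                  (Real.rpow_le_rpow (norm_nonneg _) (hQle m n (Finset.mem_Ico.1 h).1) hps0.le)
                  (Real.rpow_nonneg (abs_nonneg _) _)
              · rw [hξ0 n h, abs_zero, zero_mul, Real.zero_rpow hps0.ne', mul_zero]
            calc ∑ n ∈ Finset.range M', (|ξ n| * ‖x' n‖) ^ ps
                ≤ ∑ n ∈ Finset.range M', (⨆ k, ‖x' (m+k)‖) ^ ps * |ξ n| ^ ps :=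
                  Finset.sum_le_sum hterm
              _ = (⨆ k, ‖x' (m+k)‖) ^ ps * ∑ n ∈ Finset.range M', |ξ n| ^ ps := by
                  rw [Finset.mul_sum]
              _ = (⨆ k, ‖x' (m+k)‖) ^ ps * ∑ n ∈ Finset.Ico m M', |ξ n| ^ ps := by
                  congr 1
                  rw [Finset.range_eq_Ico, ← Finset.sum_Ico_consecutive _ (Nat.zero_le m) hmM]
                  have hz2 : ∑ n ∈ Finset.Ico 0 m, |ξ n| ^ ps = 0 :=
                    Finset.sum_eq_zero fun n hn => by
                      have hn' : n < m := (Finset.mem_Ico.1 hn).2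
                      rw [hξ0 n (by simp only [Finset.mem_Ico]; omega), abs_zero,
                        Real.zero_rpow hps0.ne']
                  rw [hz2, zero_add]
              _ = (⨆ k, ‖x' (m+k)‖) ^ ps * 1 := by rw [hξsum]
              _ = (⨆ k, ‖x' (m+k)‖) ^ ps := mul_one _
          calc (∑ n ∈ Finset.range M', (|ξ n| * ‖x' n‖) ^ ps) ^ (1/ps)
              ≤ ((⨆ k, ‖x' (m+k)‖) ^ ps) ^ (1/ps) :=
                Real.rpow_le_rpow (Finset.sum_nonneg fun n _ =>
                  Real.rpow_nonneg (mul_nonneg (abs_nonneg _) (norm_nonneg _)) _) h1 hips.le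
            _ = ⨆ k, ‖x' (m+k)‖ := by
                rw [← Real.rpow_mul (hQ0 m), mul_one_div, div_self hps0.ne', Real.rpow_one]
        have hest : (∫ t : Set.Icc (0:ℝ) 1, (Spart x' ξ M' t) (f t))
            ≤ Ta * (⨆ k, ‖x' (m+k)‖) * ‖f‖ := by
          calc (∫ t : Set.Icc (0:ℝ) 1, (Spart x' ξ M' t) (f t))
              ≤ ∫ t : Set.Icc (0:ℝ) 1, ‖Spart x' ξ M' t‖ * ‖f‖ := by
                refine integral_mono hint1 ((Spart_integrable x' ξ M').mul_const ‖f‖) fun t => ?_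
                calc (Spart x' ξ M' t) (f t) ≤ |(Spart x' ξ M' t) (f t)| := le_abs_self _
                  _ = ‖(Spart x' ξ M' t) (f t)‖ := (Real.norm_eq_abs _).symm
                  _ ≤ ‖Spart x' ξ M' t‖ * ‖f t‖ := (Spart x' ξ M' t).le_opNorm (f t)
                  _ ≤ ‖Spart x' ξ M' t‖ * ‖f‖ :=
                      mul_le_mul_of_nonneg_left (f.norm_coe_le_norm t) (norm_nonneg _)
            _ = (∫ t : Set.Icc (0:ℝ) 1, ‖Spart x' ξ M' t‖) * ‖f‖ := by
                rw [integral_mul_const]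
            _ ≤ (Ta * (∑ n ∈ Finset.range M', (|ξ n| * ‖x' n‖) ^ ps) ^ (1/ps)) * ‖f‖ :=
                mul_le_mul_of_nonneg_right (key_ps ξ M') (norm_nonneg f)
            _ ≤ Ta * (⨆ k, ‖x' (m+k)‖) * ‖f‖ :=
                mul_le_mul_of_nonneg_right (mul_le_mul_of_nonneg_left hub hTa) (norm_nonneg f)
        have hfin : Sp ^ (1/p) ≤ Ta * (⨆ k, ‖x' (m+k)‖) * ‖f‖ := by
          rw [← hpair, hpair2]
          exact hest
        calc Sp = (Sp ^ (1/p)) ^ p := by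
              rw [← Real.rpow_mul hpos.le, one_div_mul_cancel (ne_of_gt hp0), Real.rpow_one]
          _ ≤ (Ta * (⨆ k, ‖x' (m+k)‖) * ‖f‖) ^ p :=
              Real.rpow_le_rpow (Real.rpow_nonneg hpos.le _) hfin hp0.le
    have Efin : ∀ (m : ℕ) (s : Finset ℕ) (f : C(Set.Icc (0:ℝ) 1, X)), (∀ n ∈ s, m ≤ n) →
        ∑ n ∈ s, |coord x' f n| ^ p ≤ (Ta * (⨆ k, ‖x' (m+k)‖) * ‖f‖) ^ p := by
      intro m s f hs
      have hsub : s ⊆ Finset.Ico m ((s.sup id) + 1) := by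
        intro n hn
        simp only [Finset.mem_Ico]
        exact ⟨hs n hn, Nat.lt_succ_of_le (Finset.le_sup (f := id) hn)⟩
      calc ∑ n ∈ s, |coord x' f n| ^ p
          ≤ ∑ n ∈ Finset.Ico m ((s.sup id) + 1), |coord x' f n| ^ p :=
            Finset.sum_le_sum_of_subset_of_nonneg hsub
              (fun n _ _ => Real.rpow_nonneg (abs_nonneg _) _)
        _ ≤ _ := E m _ f
    have hmem : ∀ f : C(Set.Icc (0:ℝ) 1, X),
        Memℓp (fun n => coord x' f n) (ENNReal.ofReal p) := by
      intro f
      refine memℓp_gen' (C := (Ta * (⨆ k, ‖x' (0+k)‖) * ‖f‖) ^ p) ?_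
      intro s
      have h10 : ∑ n ∈ s, ‖coord x' f n‖ ^ (ENNReal.ofReal p).toReal
          = ∑ n ∈ s, |coord x' f n| ^ p := by
        refine Finset.sum_congr rfl fun n _ => ?_
        rw [hptoReal, Real.norm_eq_abs]
      rw [h10]
      exact Efin 0 s f (fun n _ => Nat.zero_le n)
    obtain ⟨U, hUcoe⟩ : ∃ U : C(Set.Icc (0:ℝ) 1, X) →L[ℝ] lp (fun _ : ℕ => ℝ) (ENNReal.ofReal p),
        ∀ f n, U f n = coord x' f n := by
      have hptR : 0 < (ENNReal.ofReal p).toReal := by rw [hptoReal]; exact hp0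
      refine ⟨LinearMap.mkContinuous
        { toFun := fun f =>
            (⟨fun n => coord x' f n, hmem f⟩ : lp (fun _ : ℕ => ℝ) (ENNReal.ofReal p))
          map_add' := fun f g => ?_
          map_smul' := fun r f => ?_ }
        (Ta * (⨆ k, ‖x' (0+k)‖)) (fun f => ?_), fun f n => rfl⟩
      · apply Subtype.ext
        funext n
        exact coord_add x' f g n
      · apply Subtype.ext
        funext n
        exact coord_smul x' r f n
      · refine lp.norm_le_of_forall_sum_le hptR
          (mul_nonneg (mul_nonneg hTa (hQ0 0)) (norm_nonneg f)) fun s => ?_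
        have h10 : ∑ n ∈ s, ‖coord x' f n‖ ^ (ENNReal.ofReal p).toReal
            = ∑ n ∈ s, |coord x' f n| ^ p := by
          refine Finset.sum_congr rfl fun n _ => ?_
          rw [hptoReal, Real.norm_eq_abs]
        rw [hptoReal]
        calc ∑ n ∈ s, ‖coord x' f n‖ ^ p = ∑ n ∈ s, |coord x' f n| ^ p := by
              refine Finset.sum_congr rfl fun n _ => ?_
              rw [Real.norm_eq_abs]
          _ ≤ (Ta * (⨆ k, ‖x' (0+k)‖) * ‖f‖) ^ p := Efin 0 s f (fun n _ => Nat.zero_le n)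
    refine ⟨U, fun f n => by rw [hUcoe f n, coord], ?_⟩
    have hpne : (ENNReal.ofReal p) ≠ 0 := by
      simp only [ne_eq, ENNReal.ofReal_eq_zero, not_le]
      linarith
    have hevn : ∀ n : ℕ, ∃ e : lp (fun _ : ℕ => ℝ) (ENNReal.ofReal p) →L[ℝ] ℝ,
        ∀ x, e x = x n := by
      intro n
      refine ⟨LinearMap.mkContinuous
        { toFun := fun x : lp (fun _ : ℕ => ℝ) (ENNReal.ofReal p) => x n
          map_add' := fun x y => ?_
          map_smul' := fun r x => ?_ } 1 (fun x => ?_), fun x => rfl⟩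
      · exact congrFun (lp.coeFn_add x y) n
      · exact congrFun (lp.coeFn_smul r x) n
      · rw [one_mul]
        exact lp.norm_apply_le_norm hpne x n
    choose ev hev using hevn
    have hrank : ∀ (g : C(Set.Icc (0:ℝ) 1, X) →L[ℝ] ℝ)
        (v : lp (fun _ : ℕ => ℝ) (ENNReal.ofReal p)),
        IsCompactOperator ⇑(g.smulRight v) := by
      intro g v
      rw [isCompactOperator_iff_exists_mem_nhds_image_subset_compact]
      refine ⟨Metric.ball 0 1, Metric.ball_mem_nhds 0 one_pos,
        (fun r : ℝ => r • v) '' Set.Icc (-(‖g‖+1)) (‖g‖+1),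
        isCompact_Icc.image (continuous_id.smul continuous_const), ?_⟩
      rintro y ⟨f, hf, rfl⟩
      refine ⟨g f, ?_, ?_⟩
      · have h2 : ‖f‖ ≤ 1 := le_of_lt (mem_ball_zero_iff.1 hf)
        have h3 : |g f| ≤ ‖g‖ := by
          rw [← Real.norm_eq_abs]
          calc ‖g f‖ ≤ ‖g‖ * ‖f‖ := g.le_opNorm f
            _ ≤ ‖g‖ * 1 := mul_le_mul_of_nonneg_left h2 (norm_nonneg g)
            _ = ‖g‖ := mul_one _
        have h4 := abs_le.1 h3
        simp only [Set.mem_Icc]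
        constructor
        · linarith [h4.1]
        · linarith [h4.2]
      · simp only [ContinuousLinearMap.smulRight_apply]
    set B : ℕ → C(Set.Icc (0:ℝ) 1, X) →L[ℝ] lp (fun _ : ℕ => ℝ) (ENNReal.ofReal p) :=
      fun n => ((ev n).comp U).smulRight (lp.single (ENNReal.ofReal p) n (1:ℝ)) with hBdef
    have hB_compact : ∀ n, IsCompactOperator ⇑(B n) := fun n => hrank _ _
    have hB_apply : ∀ (n : ℕ) (f : C(Set.Icc (0:ℝ) 1, X)) (k : ℕ),
        (B n f) k = if k = n then coord x' f n else 0 := by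
      intro n f k
      rw [hBdef]
      simp only [ContinuousLinearMap.smulRight_apply, ContinuousLinearMap.comp_apply]
      rw [lp.coeFn_smul]
      simp only [Pi.smul_apply, smul_eq_mul]
      rw [hev n (U f), hUcoe f n]
      by_cases h : k = n
      · subst h
        rw [lp.single_apply_self, if_pos rfl, mul_one]
      · rw [lp.single_apply_ne _ _ _ h, if_neg h, mul_zero]
    have hVcoord : ∀ (m : ℕ) (f : C(Set.Icc (0:ℝ) 1, X)) (k : ℕ),
        ((∑ n ∈ Finset.range m, B n) f) k = if k < m then coord x' f k else 0 := by
      intro m f k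
      rw [ContinuousLinearMap.sum_apply, lp.coeFn_sum, Finset.sum_apply]
      rw [Finset.sum_congr rfl (fun n _ => hB_apply n f k)]
      rw [Finset.sum_ite_eq]
      simp [Finset.mem_range]
    have hUV : ∀ m : ℕ, ‖U - ∑ n ∈ Finset.range m, B n‖ ≤ Ta * (⨆ k, ‖x' (m+k)‖) := by
      intro m
      refine ContinuousLinearMap.opNorm_le_bound _ (mul_nonneg hTa (hQ0 m)) fun f => ?_
      refine lp.norm_le_of_forall_sum_le (by rw [hptoReal]; exact hp0)
        (mul_nonneg (mul_nonneg hTa (hQ0 m)) (norm_nonneg f)) fun s => ?_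
      rw [hptoReal]
      have hco : ∀ k, ((U - ∑ n ∈ Finset.range m, B n) f) k
          = if k < m then 0 else coord x' f k := by
        intro k
        rw [ContinuousLinearMap.sub_apply, lp.coeFn_sub, Pi.sub_apply, hUcoe f k, hVcoord m f k]
        by_cases h : k < m <;> simp [h]
      have h11 : ∑ n ∈ s, ‖((U - ∑ n ∈ Finset.range m, B n) f) n‖ ^ p
          = ∑ n ∈ s.filter (fun n => ¬ n < m), |coord x' f n| ^ p := by
        rw [Finset.sum_filter]
        refine Finset.sum_congr rfl fun n _ => ?_
        rw [hco n, Real.norm_eq_abs]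
        by_cases h : n < m
        · rw [if_pos h, if_neg (not_not_intro h), abs_zero, Real.zero_rpow (ne_of_gt hp0)]
        · rw [if_neg h, if_pos h]
      rw [h11]
      exact Efin m _ f (fun n hn => not_lt.1 (Finset.mem_filter.1 hn).2)
    have hQt : Tendsto (fun m => ⨆ k, ‖x' (m+k)‖) atTop (𝓝 0) := by
      rw [Metric.tendsto_atTop]
      intro ε hε
      obtain ⟨Nn, hNn⟩ := Metric.tendsto_atTop.1 hx0 (ε/2) (by linarith)
      refine ⟨Nn, fun m hm => ?_⟩
      rw [Real.dist_eq, sub_zero, abs_of_nonneg (hQ0 m)]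
      have h12 : (⨆ k, ‖x' (m+k)‖) ≤ ε/2 := by
        refine ciSup_le fun k => ?_
        have h13 := hNn (m+k) (by omega)
        rw [Real.dist_eq, sub_zero, abs_of_nonneg (norm_nonneg _)] at h13
        linarith
      linarith
    have htend : Tendsto (fun m => ∑ n ∈ Finset.range m, B n) atTop (𝓝 U) := by
      have hn : Tendsto (fun m => ‖(∑ n ∈ Finset.range m, B n) - U‖) atTop (𝓝 0) := by
        refine squeeze_zero (g := fun m => Ta * (⨆ k, ‖x' (m+k)‖))
          (fun m => norm_nonneg (E := C(Set.Icc (0:ℝ) 1, X) →L[ℝ]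
            lp (fun _ : ℕ => ℝ) (ENNReal.ofReal p)) _) (fun m => ?_) ?_
        · rw [norm_sub_rev (E := C(Set.Icc (0:ℝ) 1, X) →L[ℝ]
            lp (fun _ : ℕ => ℝ) (ENNReal.ofReal p))]
          exact hUV m
        · have h14 := hQt.const_mul Ta
          rw [mul_zero] at h14
          exact h14
      exact (tendsto_iff_norm_sub_tendsto_zero
        (f := fun m => ∑ n ∈ Finset.range m, B n) (b := U)).mpr hn
    have hVs : ∀ m, IsCompactOperator ⇑(∑ n ∈ Finset.range m, B n) := by
      intro m
      refine Finset.sum_induction B (fun T => IsCompactOperator ⇑T)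
        (fun T1 T2 h1 h2 => ?_) ?_ (fun n _ => hB_compact n)
      · exact h1.add h2
      · exact isCompactOperator_zero
    exact isCompactOperator_of_tendsto htend (Eventually.of_forall hVs)
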